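/- Let Q be a finite quiver with involution σ, duality structure (s, τ), and σ-compatible stability θ. Let M be a self-dual representation with σ-Harder–Narasimhan filtration 0 = U'_0 ⊂ ⋯ ⊂ U'_{r'} ⊂ M; put d'^k = dim-vector(U'_k/U'_{k−1}) and e'^∞ = dim-vector(M//U'_{r'}). Suppose M admits a chain of isotropic subrepresentations 0 = V_0 ⊆ V_1 ⊆ ⋯ ⊆ V_s ⊆ M with dim-vector(V_k/V_{k−1}) = d^k for k = 1,…,s and dim-vector(M//V_s) = e^∞, where each d^k is nonzero, μ(d^1) > ⋯ > μ(d^s) > 0, and σ(e^∞) = e^∞. Then every vertex of the polygon P(d^•, e^∞) lies on or below the polygon P(d'^•, e'^∞). -/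

import Mathlib

open scoped BigOperators

/-- A finite quiver. -/
structure FinQuiver where
  V : Type
  A : Type
  [fintypeV : Fintype V]
  [fintypeA : Fintype A]
  [decEqV : DecidableEq V]
  [decEqA : DecidableEq A]
  src : A → V
  tgt : A → V

attribute [instance] FinQuiver.fintypeV FinQuiver.fintypeA FinQuiver.decEqV FinQuiver.decEqA

/-- A finite-dimensional complex representation of a quiver. -/
structure QRep (Q : FinQuiver) where
  carrier : Q.V → Type
  [acg : ∀ i, AddCommGroup (carrier i)]
  [mod : ∀ i, Module ℂ (carrier i)]
  [fd : ∀ i, FiniteDimensional ℂ (carrier i)]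
  map : ∀ a : Q.A, carrier (Q.src a) →ₗ[ℂ] carrier (Q.tgt a)

attribute [instance] QRep.acg QRep.mod QRep.fd

namespace QRep

variable {Q : FinQuiver}

/-- A family of subspaces of a representation. -/
abbrev SubFam (X : QRep Q) := ∀ i, Submodule ℂ (X.carrier i)

/-- The family of subspaces is a subrepresentation: it is stable under all structure maps. -/
def IsSubRep (X : QRep Q) (V : X.SubFam) : Prop :=
  ∀ a : Q.A, ∀ x ∈ V (Q.src a), X.map a x ∈ V (Q.tgt a)

/-- Dimension vector (with values in `ℤ`) of a family of subspaces. -/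
noncomputable def dimZ {X : QRep Q} (V : X.SubFam) : Q.V → ℤ :=
  fun i => (Module.finrank ℂ (V i) : ℤ)

/-- Dimension vector (with values in `ℤ`) of a representation. -/
noncomputable def dimVecZ (X : QRep Q) : Q.V → ℤ :=
  fun i => (Module.finrank ℂ (X.carrier i) : ℤ)

/-- The slope of a dimension vector with respect to a stability `θ`. -/
noncomputable def slope (θ : (Q.V → ℤ) →+ ℤ) (d : Q.V → ℤ) : ℚ :=
  (θ d : ℚ) / ((∑ i, d i : ℤ) : ℚ)

/-- A representation is semistable when every nonzero subrepresentation has slope at most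
the slope of the representation. -/
def Semistable (θ : (Q.V → ℤ) →+ ℤ) (X : QRep Q) : Prop :=
  ∀ V : X.SubFam, X.IsSubRep V → V ≠ ⊥ → slope θ (dimZ V) ≤ slope θ X.dimVecZ

/-- Cast along an equality of vertices. -/
def castEquiv (X : QRep Q) {i j : Q.V} (h : i = j) : X.carrier i ≃ₗ[ℂ] X.carrier j := by
  subst h; exact LinearEquiv.refl ℂ _

end QRep

/-- An involution of a quiver. -/
structure QInv (Q : FinQuiver) where
  onV : Q.V → Q.V
  onA : Q.A → Q.A
  invV : ∀ i, onV (onV i) = i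
  invA : ∀ a, onA (onA a) = a
  src_onA : ∀ a, Q.src (onA a) = onV (Q.tgt a)
  tgt_onA : ∀ a, Q.tgt (onA a) = onV (Q.src a)
  fix_onA : ∀ a, Q.tgt a = onV (Q.src a) → onA a = a

/-- A duality structure on a quiver with involution. -/
structure Duality (Q : FinQuiver) (σ : QInv Q) where
  s : Q.V → ℤ
  τ : Q.A → ℤ
  s_pm : ∀ i, s i = 1 ∨ s i = -1
  τ_pm : ∀ a, τ a = 1 ∨ τ a = -1
  s_inv : ∀ i, s (σ.onV i) = s i
  ττ : ∀ a, τ a * τ (σ.onA a) = s (Q.src a) * s (Q.tgt a)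

namespace QRep

variable {Q : FinQuiver}

/-- A stability is σ-compatible if `θ ∘ σ = -θ`. -/
def SigmaCompatible (σ : QInv Q) (θ : (Q.V → ℤ) →+ ℤ) : Prop :=
  ∀ d : Q.V → ℤ, θ (fun i => d (σ.onV i)) = - θ d

/-- The dual representation `S(U)`, with `S(U)_i = (U_{σ(i)})^*` and
`S(u)_α = τ_α ⬝ (u_{σ(α)})^∨`. -/
noncomputable def dualRep (σ : QInv Q) (D : Duality Q σ) (X : QRep Q) : QRep Q where
  carrier := fun i => Module.Dual ℂ (X.carrier (σ.onV i))
  map := fun a => (D.τ a : ℂ) •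
    (((X.castEquiv (σ.src_onA a)).dualMap.symm.toLinearMap).comp
      (((X.map (σ.onA a)).dualMap).comp
        ((X.castEquiv (σ.tgt_onA a)).dualMap.toLinearMap)))

end QRep

namespace QRep

variable {Q : FinQuiver}

/-- Bilinear forms on the total space `⊕ᵢ Xᵢ` of a representation. -/
abbrev Bilin (X : QRep Q) := (∀ i, X.carrier i) →ₗ[ℂ] (∀ i, X.carrier i) →ₗ[ℂ] ℂ

/-- Nondegeneracy of a bilinear form. -/
def Nondeg (X : QRep Q) (B : X.Bilin) : Prop := ∀ x, (∀ y, B x y = 0) → x = 0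

/-- Condition (i) for a self-dual representation: `M_i` and `M_j` are orthogonal
unless `i = σ(j)` (equivalently `j = σ(i)`). -/
def sdOrthBlocks (σ : QInv Q) (X : QRep Q) (B : X.Bilin) : Prop :=
  ∀ i j, j ≠ σ.onV i → ∀ (x : X.carrier i) (y : X.carrier j),
    B (Pi.single i x) (Pi.single j y) = 0

/-- Condition (ii) for a self-dual representation: `⟨x, x'⟩ = s_i ⟨x', x⟩` on
`M_i + M_{σ(i)}`. -/
def sdSymm (σ : QInv Q) (D : Duality Q σ) (X : QRep Q) (B : X.Bilin) : Prop :=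
  ∀ i (x : X.carrier i) (y : X.carrier (σ.onV i)),
    B (Pi.single i x) (Pi.single (σ.onV i) y)
      = (D.s i : ℂ) * B (Pi.single (σ.onV i) y) (Pi.single i x)

/-- Condition (iii) for a self-dual representation: `⟨m_α x, x'⟩ = τ_α ⟨x, m_{σ(α)} x'⟩`. -/
def sdArrow (σ : QInv Q) (D : Duality Q σ) (X : QRep Q) (B : X.Bilin) : Prop :=
  ∀ (a : Q.A) (x : X.carrier (Q.src a)) (y : X.carrier (σ.onV (Q.tgt a))),
    B (Pi.single (Q.tgt a) (X.map a x)) (Pi.single (σ.onV (Q.tgt a)) y)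
      = (D.τ a : ℂ) * B (Pi.single (Q.src a) x)
          (Pi.single (Q.tgt (σ.onA a)) (X.map (σ.onA a) (X.castEquiv (σ.src_onA a).symm y)))

/-- The bilinear form `B` makes `X` a self-dual representation. -/
def IsSelfDualForm (σ : QInv Q) (D : Duality Q σ) (X : QRep Q) (B : X.Bilin) : Prop :=
  Nondeg X B ∧ sdOrthBlocks σ X B ∧ sdSymm σ D X B ∧ sdArrow σ D X B

/-- The orthogonal `U^⊥` of a family of subspaces:
`U^⊥_i = {m ∈ M_i : ⟨m, x⟩ = 0 for all x ∈ U_{σ(i)}}`. -/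
noncomputable def orthFam (σ : QInv Q) (X : QRep Q) (B : X.Bilin) (U : X.SubFam) : X.SubFam :=
  fun i => ⨅ y : (U (σ.onV i)),
    LinearMap.ker ((B.comp (LinearMap.single ℂ X.carrier i)).flip
      (Pi.single (σ.onV i) (y : X.carrier (σ.onV i))))

/-- A family of subspaces is isotropic if `U ≤ U^⊥`. -/
def IsotropicFam (σ : QInv Q) (X : QRep Q) (B : X.Bilin) (U : X.SubFam) : Prop :=
  U ≤ orthFam σ X B U

/-- σ-semistability of a self-dual representation: every nonzero isotropic
subrepresentation has slope at most `0`. -/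
def SigmaSemistable (σ : QInv Q) (θ : (Q.V → ℤ) →+ ℤ) (X : QRep Q) (B : X.Bilin) : Prop :=
  ∀ U : X.SubFam, X.IsSubRep U → IsotropicFam σ X B U → U ≠ ⊥ → slope θ (dimZ U) ≤ 0

end QRep

namespace QRep

variable {Q : FinQuiver}

/-- Semistability of the subquotient `W/V` of a representation `X` (for `V ≤ W`):
every subrepresentation `Y` with `V ≤ Y ≤ W`, `Y ≠ V`, satisfies
`μ(Y/V) ≤ μ(W/V)`.  (Subrepresentations of `W/V` correspond to such `Y`.) -/
def SubquotSemistable (θ : (Q.V → ℤ) →+ ℤ) (X : QRep Q) (V W : X.SubFam) : Prop :=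
  ∀ Y : X.SubFam, X.IsSubRep Y → V ≤ Y → Y ≤ W → Y ≠ V →
    slope θ (dimZ Y - dimZ V) ≤ slope θ (dimZ W - dimZ V)

/-- σ-semistability of the self-dual subquotient `M ∕∕ V = V^⊥/V` of a self-dual
representation `(X, B)`: every isotropic subrepresentation `W` with `V ≤ W ≤ V^⊥`,
`W ≠ V` (these correspond to the nonzero isotropic subrepresentations of `M ∕∕ V`)
satisfies `μ(W/V) ≤ 0`. -/
def SigmaSemistableQuot (σ : QInv Q) (θ : (Q.V → ℤ) →+ ℤ) (X : QRep Q) (B : X.Bilin)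
    (V : X.SubFam) : Prop :=
  ∀ W : X.SubFam, X.IsSubRep W → V ≤ W → W ≤ orthFam σ X B V →
    IsotropicFam σ X B W → W ≠ V → slope θ (dimZ W - dimZ V) ≤ 0

/-- The slope of the `k`-th subquotient of a filtration. -/
noncomputable def stepSlope (θ : (Q.V → ℤ) →+ ℤ) {X : QRep Q} (r : ℕ)
    (U : Fin (r+1) → X.SubFam) (k : Fin r) : ℚ :=
  slope θ (dimZ (U k.succ) - dimZ (U k.castSucc))

/-- `U` is the σ-Harder–Narasimhan filtration `0 = U_0 ⊂ U_1 ⊂ ⋯ ⊂ U_r ⊂ M` of the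
self-dual representation `(X, B)`: an isotropic filtration with semistable subquotients
of strictly decreasing positive slopes such that `M ∕∕ U_r` is σ-semistable. -/
def IsSigmaHN (σ : QInv Q) (θ : (Q.V → ℤ) →+ ℤ) (X : QRep Q) (B : X.Bilin)
    (r : ℕ) (U : Fin (r+1) → X.SubFam) : Prop :=
  (∀ k, X.IsSubRep (U k)) ∧
  (U 0 = ⊥) ∧
  (∀ k : Fin r, U k.castSucc ≤ U k.succ) ∧
  (∀ k : Fin r, U k.castSucc ≠ U k.succ) ∧
  (∀ k, IsotropicFam σ X B (U k)) ∧
  (∀ k : Fin r, SubquotSemistable θ X (U k.castSucc) (U k.succ)) ∧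
  (∀ k l : Fin r, k < l → stepSlope θ r U l < stepSlope θ r U k) ∧
  (∀ k : Fin r, 0 < stepSlope θ r U k) ∧
  SigmaSemistableQuot σ θ X B (U (Fin.last r))

end QRep

namespace QRep

variable {Q : FinQuiver}

/-- Total dimension of a dimension vector. -/
def totalZ (d : Q.V → ℤ) : ℤ := ∑ i, d i

/-- First coordinates (partial sums of total dimensions) of the vertices of the
polygon attached to a sequence of dimension vectors. -/
def seqA (c : ℕ → Q.V → ℤ) (l : ℕ) : ℤ := ∑ k ∈ Finset.range l, totalZ (c k)

/-- Second coordinates (partial sums of `θ`-values) of the vertices of the polygon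
attached to a sequence of dimension vectors. -/
def seqB (θ : (Q.V → ℤ) →+ ℤ) (c : ℕ → Q.V → ℤ) (l : ℕ) : ℤ :=
  ∑ k ∈ Finset.range l, θ (c k)

/-- The doubled sequence `(d^1, …, d^r, e^∞, σ(d^r), …, σ(d^1))` (0-indexed) attached
to a σ-HN type `(d^•, e^∞)`. -/
def doubledSeq (σ : QInv Q) (r : ℕ) (d : ℕ → Q.V → ℤ) (e : Q.V → ℤ) : ℕ → Q.V → ℤ :=
  fun k => if k < r then d k else if k = r then e else fun i => d (2*r - k) (σ.onV i)

/-- The point `(a, b)` lies on or below the polygon with vertices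
`(A 0, B 0), …, (A m, B m)`. -/
def OnOrBelow (a b : ℤ) (m : ℕ) (A B : ℕ → ℤ) : Prop :=
  ∀ l : ℕ, 1 ≤ l → l ≤ m → A (l-1) < A l →
    (A l - A (l-1)) * b ≤ (A l - A (l-1)) * B (l-1) + (B l - B (l-1)) * (a - A (l-1))

end QRep

namespace QRep

variable {Q : FinQuiver}

/-- The sequence of dimension vectors of the subquotients of a filtration
(extended by `0` beyond the length of the filtration). -/
noncomputable def chainSteps {X : QRep Q} (r : ℕ) (U : Fin (r+1) → X.SubFam) :
    ℕ → Q.V → ℤ :=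
  fun k => if h : k < r then dimZ (U ⟨k+1, by omega⟩) - dimZ (U ⟨k, by omega⟩) else 0

/-- The dimension vector of the self-dual quotient `M ∕∕ V = V^⊥/V`. -/
noncomputable def quotDimZ (σ : QInv Q) {X : QRep Q} (B : X.Bilin) (V : X.SubFam) :
    Q.V → ℤ :=
  dimZ (orthFam σ X B V) - dimZ V

end QRep

/-!
Together with the orthogonals of its terms, the σ-HN filtration `U'` gives a filtration
`U'_0 ⊆ ⋯ ⊆ U'_{r'} ⊆ U'_{r'}^⊥ ⊆ ⋯ ⊆ U'_0^⊥` of `M` as an ordinary representation, with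
semistable steps of decreasing slopes `μ(d'^1), …, μ(d'^{r'}), 0, -μ(d'^{r'}), …, -μ(d'^1)`:
the middle step is semistable because `M ∕∕ U'_{r'}` is σ-semistable, and the upper steps are
dual to the lower ones. Its polygon is `P(d'^•, e'^∞)`, and, as for any Harder–Narasimhan
filtration, intersecting a subrepresentation `W` with it shows that `(dim W, θ(W))` lies on
or below that polygon. The vertices of `P(d^•, e^∞)` are the points of `W = V_l` and
`W = V_l^⊥`.
-/

open Module

instance Pi.wellFoundedGT {ι : Type*} [Finite ι] {α : ι → Type*} [∀ i, Preorder (α i)]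
    [∀ i, WellFoundedGT (α i)] : WellFoundedGT (∀ i, α i) :=
  -- `<` on `∀ i, (α i)ᵒᵈ` is `>` on `∀ i, α i`
  Pi.wellFoundedLT (α := fun i => (α i)ᵒᵈ)

lemma le_polygon_line_of_increments {m j : ℕ} (hj : j < m) {μ A B t b : ℕ → ℚ}
    (hμ : ∀ i k, i ≤ k → k < m → μ k ≤ μ i)
    (hB : ∀ k < m, B (k+1) - B k = μ k * (A (k+1) - A k))
    (ht : ∀ k < m, 0 ≤ t (k+1) - t k) (htA : ∀ k < m, t (k+1) - t k ≤ A (k+1) - A k)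
    (hb : ∀ k < m, b (k+1) - b k ≤ μ k * (t (k+1) - t k)) :
    b m - b 0 ≤ B j - B 0 + μ j * (t m - t 0 - (A j - A 0)) := by
  -- `g k` is the height of `b k` above the line of slope `μ j` through the vertex `min k j`;
  -- it does not increase
  set g : ℕ → ℚ := fun k => b k - μ j * t k - (B (min k j) - μ j * A (min k j))
  have hstep : ∀ k < m, g (k+1) - g k ≤ 0 := by
    intro k hk
    rcases lt_or_ge k j with hkj | hkj
    · have hμA := mul_le_mul_of_nonneg_left (htA k hk) (sub_nonneg.mpr (hμ k j hkj.le hj))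
      simp only [g, min_eq_left hkj.le, min_eq_left (Nat.succ_le_of_lt hkj)]
      linarith [hb k hk, hB k hk]
    · have hμt := mul_le_mul_of_nonneg_right (hμ j k hkj hk) (ht k hk)
      simp only [g, min_eq_right hkj, min_eq_right (hkj.trans k.le_succ)]
      linarith [hb k hk]
  have hsum := Finset.sum_nonpos fun k hk => hstep k (Finset.mem_range.mp hk)
  rw [Finset.sum_range_sub] at hsum
  simp only [g, min_eq_right hj.le, Nat.zero_min] at hsum
  linarith

lemma Nat.forall_lt_two_mul_add_one {r : ℕ} {P : ℕ → Prop} (hlow : ∀ k : Fin r, P k)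
    (hmid : P r) (hhigh : ∀ k : Fin r, P (2*r - k)) : ∀ l < 2*r+1, P l := by
  intro l hl
  rcases lt_trichotomy l r with h | rfl | h
  · exact hlow ⟨l, h⟩
  · exact hmid
  · simpa [show 2*r - (2*r - l) = l by omega] using hhigh ⟨2*r - l, by omega⟩

namespace QRep

variable {Q : FinQuiver}

section Dimension

variable {X : QRep Q}

lemma totalZ_sub (a b : Q.V → ℤ) : totalZ (a - b) = totalZ a - totalZ b :=
  Finset.sum_sub_distrib _ _

lemma totalZ_comp_onV (σ : QInv Q) (d : Q.V → ℤ) : totalZ (fun i => d (σ.onV i)) = totalZ d :=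
  Equiv.sum_comp (Function.Involutive.toPerm _ σ.invV) d

lemma dimZ_bot : dimZ (⊥ : X.SubFam) = 0 := by
  funext i
  simp [dimZ]

lemma dimZ_mono {V W : X.SubFam} (h : V ≤ W) : dimZ V ≤ dimZ W := fun i => by
  simpa [dimZ] using Submodule.finrank_mono (h i)

lemma totalZ_dimZ_mono {V W : X.SubFam} (h : V ≤ W) : totalZ (dimZ V) ≤ totalZ (dimZ W) :=
  Finset.sum_le_sum fun i _ => dimZ_mono h i

lemma totalZ_dimZ_sub_pos {V W : X.SubFam} (h : V < W) : 0 < totalZ (dimZ W - dimZ V) := by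
  obtain ⟨hle, i, hi⟩ := Pi.lt_def.mp h
  rw [totalZ_sub, sub_pos]
  refine Finset.sum_lt_sum (fun j _ => dimZ_mono hle j) ⟨i, Finset.mem_univ i, ?_⟩
  simpa [dimZ] using Submodule.finrank_lt_finrank_of_lt hi

lemma dimZ_sup_add_dimZ_inf (V W : X.SubFam) :
    dimZ (V ⊔ W) + dimZ (V ⊓ W) = dimZ V + dimZ W := by
  funext i
  simpa [dimZ] using
    congrArg (Nat.cast (R := ℤ)) (Submodule.finrank_sup_add_finrank_inf_eq (V i) (W i))

lemma dimZ_inf_sup_sub {V F G : X.SubFam} (hFG : F ≤ G) :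
    dimZ (V ⊓ G ⊔ F) - dimZ F = dimZ (V ⊓ G) - dimZ (V ⊓ F) := by
  have h := dimZ_sup_add_dimZ_inf (V ⊓ G) F
  rw [inf_assoc, inf_eq_right.mpr hFG] at h
  rw [sub_eq_sub_iff_add_eq_add, ← h, add_comm]

lemma IsSubRep.inf {V W : X.SubFam} (hV : X.IsSubRep V) (hW : X.IsSubRep W) :
    X.IsSubRep (V ⊓ W) :=
  fun a x hx => ⟨hV a x hx.1, hW a x hx.2⟩

lemma IsSubRep.sup {V W : X.SubFam} (hV : X.IsSubRep V) (hW : X.IsSubRep W) :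
    X.IsSubRep (V ⊔ W) := by
  intro a x hx
  obtain ⟨y, hy, z, hz, rfl⟩ := Submodule.mem_sup.mp hx
  rw [map_add]
  exact Submodule.add_mem_sup (hV a y hy) (hW a z hz)

end Dimension

section SelfDual

variable {σ : QInv Q} {D : Duality Q σ} {M : QRep Q} {B : M.Bilin}

lemma single_castEquiv {i j : Q.V} (h : i = j) (x : M.carrier i) :
    Pi.single i x = Pi.single j (M.castEquiv h x) := by
  subst h; rfl

lemma castEquiv_mem {V : M.SubFam} {i j : Q.V} (h : i = j) {x : M.carrier i} (hx : x ∈ V i) :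
    M.castEquiv h x ∈ V j := by
  subst h; exact hx

lemma mem_orthFam {U : M.SubFam} {i : Q.V} {x : M.carrier i} :
    x ∈ orthFam σ M B U i ↔
      ∀ y ∈ U (σ.onV i), B (Pi.single i x) (Pi.single (σ.onV i) y) = 0 := by
  simp only [orthFam, Submodule.mem_iInf, LinearMap.mem_ker, LinearMap.flip_apply,
    LinearMap.comp_apply, Subtype.forall]
  rfl

noncomputable def pairing (σ : QInv Q) (M : QRep Q) (B : M.Bilin) (i : Q.V) :
    M.carrier i →ₗ[ℂ] Module.Dual ℂ (M.carrier (σ.onV i)) :=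
  (B.comp (LinearMap.single ℂ M.carrier i)).compl₂ (LinearMap.single ℂ M.carrier (σ.onV i))

lemma pairing_apply (i : Q.V) (x : M.carrier i) (y : M.carrier (σ.onV i)) :
    pairing σ M B i x y = B (Pi.single i x) (Pi.single (σ.onV i) y) := rfl

lemma IsSelfDualForm.pairing_injective (hB : IsSelfDualForm σ D M B) (i : Q.V) :
    Function.Injective (pairing σ M B i) := by
  refine (injective_iff_map_eq_zero _).mpr fun x hx => ?_
  have hzero : ∀ z, B (Pi.single i x) z = 0 := by
    intro z
    rw [← Finset.univ_sum_single z, map_sum]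
    refine Finset.sum_eq_zero fun j _ => ?_
    by_cases hj : j = σ.onV i
    · subst hj
      exact LinearMap.congr_fun hx (z (σ.onV i))
    · exact hB.2.1 i j hj x (z j)
  exact Pi.single_eq_zero_iff.mp (hB.1 _ hzero)

lemma IsSelfDualForm.finrank_onV (hB : IsSelfDualForm σ D M B) (i : Q.V) :
    finrank ℂ (M.carrier (σ.onV i)) = finrank ℂ (M.carrier i) := by
  have h1 := LinearMap.finrank_le_finrank_of_injective (hB.pairing_injective i)
  have h2 := LinearMap.finrank_le_finrank_of_injective (hB.pairing_injective (σ.onV i))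
  rw [Subspace.dual_finrank_eq] at h1 h2
  rw [(M.castEquiv (σ.invV i)).finrank_eq] at h2
  omega

lemma IsSelfDualForm.finrank_orthFam_add (hB : IsSelfDualForm σ D M B) (W : M.SubFam)
    (i : Q.V) :
    finrank ℂ (orthFam σ M B W i) + finrank ℂ (W (σ.onV i)) = finrank ℂ (M.carrier i) := by
  let e := LinearMap.linearEquivOfInjective _ (hB.pairing_injective i)
    (by rw [Subspace.dual_finrank_eq, hB.finrank_onV])
  have horth : orthFam σ M B W i = (W (σ.onV i)).dualAnnihilator.comap e.toLinearMap := by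
    ext x
    simp only [mem_orthFam, Submodule.mem_comap, Submodule.mem_dualAnnihilator]
    rfl
  have h := Subspace.finrank_add_finrank_dualAnnihilator_eq (W (σ.onV i))
  rw [horth, Submodule.comap_equiv_eq_map_symm, LinearEquiv.finrank_map_eq]
  rw [hB.finrank_onV] at h
  omega

lemma orthFam_antitone {U W : M.SubFam} (h : U ≤ W) : orthFam σ M B W ≤ orthFam σ M B U :=
  fun _ _ hx => mem_orthFam.mpr fun y hy => mem_orthFam.mp hx y (h _ hy)

lemma orthFam_bot : orthFam σ M B ⊥ = ⊤ :=
  funext fun _ => eq_top_iff.mpr fun x _ => mem_orthFam.mpr fun y hy => by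
    rw [(Submodule.mem_bot ℂ).mp hy, Pi.single_zero, map_zero]

lemma IsSelfDualForm.le_orthFam_comm (hB : IsSelfDualForm σ D M B) {U Y : M.SubFam}
    (h : Y ≤ orthFam σ M B U) : U ≤ orthFam σ M B Y := by
  intro i u hu
  refine mem_orthFam.mpr fun y hy => ?_
  rw [hB.2.2.1 i u y, single_castEquiv (σ.invV i).symm u,
    mem_orthFam.mp (h _ hy) _ (castEquiv_mem (σ.invV i).symm hu), mul_zero]

lemma IsSelfDualForm.orthFam_orthFam (hB : IsSelfDualForm σ D M B) (W : M.SubFam) :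
    orthFam σ M B (orthFam σ M B W) = W := by
  funext i
  refine (Submodule.eq_of_le_of_finrank_le (hB.le_orthFam_comm le_rfl i) ?_).symm
  have h1 := hB.finrank_orthFam_add (orthFam σ M B W) i
  have h2 := hB.finrank_orthFam_add W (σ.onV i)
  have h3 := hB.finrank_onV i
  rw [σ.invV i] at h2
  omega

lemma IsSelfDualForm.isSubRep_orthFam (hB : IsSelfDualForm σ D M B) {W : M.SubFam}
    (hW : M.IsSubRep W) : M.IsSubRep (orthFam σ M B W) := by
  intro a x hx
  refine mem_orthFam.mpr fun y hy => ?_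
  have hy' := hW _ _ (castEquiv_mem (σ.src_onA a).symm hy)
  rw [hB.2.2.2 a x y, single_castEquiv (σ.tgt_onA a),
    mem_orthFam.mp hx _ (castEquiv_mem (σ.tgt_onA a) hy'), mul_zero]

lemma IsSelfDualForm.dimZ_orthFam (hB : IsSelfDualForm σ D M B) (W : M.SubFam) :
    dimZ (orthFam σ M B W) = M.dimVecZ - fun i => dimZ W (σ.onV i) := by
  funext i
  have := hB.finrank_orthFam_add W i
  simp only [dimZ, dimVecZ, Pi.sub_apply]
  omega

lemma IsSelfDualForm.totalZ_dimZ_orthFam (hB : IsSelfDualForm σ D M B) (W : M.SubFam) :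
    totalZ (dimZ (orthFam σ M B W)) = totalZ M.dimVecZ - totalZ (dimZ W) := by
  rw [hB.dimZ_orthFam, totalZ_sub, totalZ_comp_onV]

lemma IsSelfDualForm.theta_dimZ_orthFam (hB : IsSelfDualForm σ D M B) {θ : (Q.V → ℤ) →+ ℤ}
    (hθ : SigmaCompatible σ θ) (W : M.SubFam) :
    θ (dimZ (orthFam σ M B W)) = θ (dimZ W) := by
  have hM : θ M.dimVecZ = 0 := by
    have h := hθ M.dimVecZ
    have hσ : (fun i => M.dimVecZ (σ.onV i)) = M.dimVecZ :=
      funext fun i => by simp only [dimVecZ, hB.finrank_onV]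
    rw [hσ] at h
    omega
  rw [hB.dimZ_orthFam, map_sub, hM, hθ, zero_sub, neg_neg]

end SelfDual

section SlopeBound

variable {θ : (Q.V → ℤ) →+ ℤ}

lemma theta_eq_slope_mul {d : Q.V → ℤ} (h : totalZ d ≠ 0) :
    (θ d : ℚ) = slope θ d * totalZ d :=
  (div_mul_cancel₀ _ (by exact_mod_cast h)).symm

lemma theta_le_mul_of_slope_le {d : Q.V → ℤ} {μ : ℚ} (h : 0 < totalZ d) (hμ : slope θ d ≤ μ) :
    (θ d : ℚ) ≤ μ * totalZ d := by
  rw [theta_eq_slope_mul h.ne']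
  exact mul_le_mul_of_nonneg_right hμ (by exact_mod_cast h.le)

/-- Semistability of `G/F` at slope `μ`, with denominators cleared. -/
def SubquotSlopeBound (θ : (Q.V → ℤ) →+ ℤ) (X : QRep Q) (F G : X.SubFam) (μ : ℚ) : Prop :=
  ∀ Y : X.SubFam, X.IsSubRep Y → F ≤ Y → Y ≤ G →
    (θ (dimZ Y - dimZ F) : ℚ) ≤ μ * totalZ (dimZ Y - dimZ F)

variable {X : QRep Q} {F G : X.SubFam}

lemma SubquotSemistable.slopeBound (h : SubquotSemistable θ X F G) :
    SubquotSlopeBound θ X F G (slope θ (dimZ G - dimZ F)) := by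
  intro Y hY hFY hYG
  rcases hFY.lt_or_eq with hlt | rfl
  · exact theta_le_mul_of_slope_le (totalZ_dimZ_sub_pos hlt) (h Y hY hFY hYG hlt.ne')
  · simp [totalZ]

lemma SubquotSlopeBound.inf {μ : ℚ} (h : SubquotSlopeBound θ X F G μ) (hF : X.IsSubRep F)
    (hG : X.IsSubRep G) (hFG : F ≤ G) {W : X.SubFam} (hW : X.IsSubRep W) :
    (θ (dimZ (W ⊓ G)) : ℚ) - θ (dimZ (W ⊓ F)) ≤
      μ * (totalZ (dimZ (W ⊓ G)) - totalZ (dimZ (W ⊓ F))) := by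
  have hY := h (W ⊓ G ⊔ F) ((hW.inf hG).sup hF) le_sup_right (sup_le inf_le_right hFG)
  rw [dimZ_inf_sup_sub hFG, map_sub, totalZ_sub] at hY
  exact_mod_cast hY

variable {σ : QInv Q} {D : Duality Q σ} {B : X.Bilin}

lemma SubquotSlopeBound.orth (hB : IsSelfDualForm σ D X B) (hθ : SigmaCompatible σ θ)
    {μ : ℚ} (h : SubquotSlopeBound θ X F G μ)
    (hexact : (θ (dimZ G - dimZ F) : ℚ) = μ * totalZ (dimZ G - dimZ F)) :
    SubquotSlopeBound θ X (orthFam σ X B G) (orthFam σ X B F) (-μ) := by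
  intro Y hY hGY hYF
  have hZ := h (orthFam σ X B Y) (hB.isSubRep_orthFam hY) (hB.le_orthFam_comm hYF)
    (by simpa only [hB.orthFam_orthFam] using orthFam_antitone (σ := σ) (B := B) hGY)
  simp only [map_sub, totalZ_sub, hB.theta_dimZ_orthFam hθ, hB.totalZ_dimZ_orthFam] at hZ hexact ⊢
  push_cast at hZ hexact ⊢
  linarith

lemma SigmaSemistableQuot.theta_le_of_isotropic {U Y : X.SubFam}
    (hss : SigmaSemistableQuot σ θ X B U) (hY : X.IsSubRep Y) (hUY : U ≤ Y)
    (hYU : Y ≤ orthFam σ X B U) (hiso : IsotropicFam σ X B Y) : θ (dimZ Y) ≤ θ (dimZ U) := by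
  rcases hUY.lt_or_eq with hlt | rfl
  · have h := theta_le_mul_of_slope_le (totalZ_dimZ_sub_pos hlt) (hss Y hY hUY hYU hiso hlt.ne')
    rw [zero_mul, map_sub] at h
    have : θ (dimZ Y) - θ (dimZ U) ≤ 0 := by exact_mod_cast h
    omega
  · exact le_rfl

/-- Downward induction on `Y`: if `Y^⊥ ≤ Y`, then `Y^⊥` is isotropic with `θ(Y^⊥) = θ(Y)`;
otherwise `Y ⊔ Y^⊥ > Y` and the isotropic `Y ⊓ Y^⊥` have `θ`-values adding up to `2 θ(Y)`. -/
lemma SigmaSemistableQuot.theta_le (hB : IsSelfDualForm σ D X B) (hθ : SigmaCompatible σ θ)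
    {U Y : X.SubFam} (hss : SigmaSemistableQuot σ θ X B U) (hY : X.IsSubRep Y) (hUY : U ≤ Y)
    (hYU : Y ≤ orthFam σ X B U) : θ (dimZ Y) ≤ θ (dimZ U) := by
  induction Y using WellFoundedGT.induction with
  | _ Y ih =>
  set Z := orthFam σ X B Y
  have hZ : X.IsSubRep Z := hB.isSubRep_orthFam hY
  have hUZ : U ≤ Z := hB.le_orthFam_comm hYU
  have hZU : Z ≤ orthFam σ X B U := orthFam_antitone hUY
  have hθZ : θ (dimZ Z) = θ (dimZ Y) := hB.theta_dimZ_orthFam hθ Y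
  by_cases hZY : Z ≤ Y
  · have hZiso : IsotropicFam σ X B Z := by
      rwa [IsotropicFam, hB.orthFam_orthFam]
    exact hθZ ▸ hss.theta_le_of_isotropic hZ hUZ hZU hZiso
  · have hsup := ih (Y ⊔ Z) (lt_of_le_of_ne le_sup_left fun h => hZY (h ▸ le_sup_right))
      (hY.sup hZ) (hUY.trans le_sup_left) (sup_le hYU hZU)
    have hinf := hss.theta_le_of_isotropic (hY.inf hZ) (le_inf hUY hUZ) (inf_le_left.trans hYU)
      (inf_le_right.trans (orthFam_antitone inf_le_left))
    have hadd := congrArg θ (dimZ_sup_add_dimZ_inf Y Z)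
    rw [map_add, map_add] at hadd
    omega

lemma SigmaSemistableQuot.slopeBound (hB : IsSelfDualForm σ D X B) (hθ : SigmaCompatible σ θ)
    {U : X.SubFam} (hss : SigmaSemistableQuot σ θ X B U) :
    SubquotSlopeBound θ X U (orthFam σ X B U) 0 := by
  intro Y hY hUY hYU
  have h := hss.theta_le hB hθ hY hUY hYU
  rw [zero_mul, map_sub]
  exact_mod_cast sub_nonpos.mpr h

end SlopeBound

section WeakHN

variable {θ : (Q.V → ℤ) →+ ℤ} {X : QRep Q}

lemma onOrBelow_congr {a b : ℤ} {m : ℕ} {A A' B B' : ℕ → ℤ} (hA : ∀ l ≤ m, A l = A' l)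
    (hB : ∀ l ≤ m, B l = B' l) : OnOrBelow a b m A B ↔ OnOrBelow a b m A' B' := by
  refine forall_congr' fun l => forall_congr' fun hl => forall_congr' fun hlm => ?_
  rw [hA l hlm, hA (l-1) (by omega), hB l hlm, hB (l-1) (by omega)]

/-- A Harder–Narasimhan filtration `0 = F 0 ≤ ⋯ ≤ F m = X` in which consecutive slopes may
coincide and steps may be trivial; `μ k` is the slope of the `k`-th step. -/
structure IsWeakHNFiltration (θ : (Q.V → ℤ) →+ ℤ) (X : QRep Q) (m : ℕ) (F : ℕ → X.SubFam)
    (μ : ℕ → ℚ) : Prop where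
  bot : F 0 = ⊥
  top : F m = ⊤
  isSubRep : ∀ k ≤ m, X.IsSubRep (F k)
  mono : ∀ k < m, F k ≤ F (k+1)
  slope_antitone : ∀ j k, j ≤ k → k < m → μ k ≤ μ j
  theta_step : ∀ k < m, (θ (dimZ (F (k+1)) - dimZ (F k)) : ℚ) =
    μ k * totalZ (dimZ (F (k+1)) - dimZ (F k))
  slopeBound : ∀ k < m, SubquotSlopeBound θ X (F k) (F (k+1)) (μ k)

namespace IsWeakHNFiltration

variable {m : ℕ} {F : ℕ → X.SubFam} {μ : ℕ → ℚ}

lemma theta_le_polygon_line (hF : IsWeakHNFiltration θ X m F μ) {W : X.SubFam}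
    (hW : X.IsSubRep W) {j : ℕ} (hj : j < m) :
    (θ (dimZ W) : ℚ) ≤ θ (dimZ (F j)) + μ j * (totalZ (dimZ W) - totalZ (dimZ (F j))) := by
  have h := le_polygon_line_of_increments hj (A := fun k => totalZ (dimZ (F k)))
    (B := fun k => θ (dimZ (F k))) (t := fun k => totalZ (dimZ (W ⊓ F k)))
    (b := fun k => θ (dimZ (W ⊓ F k))) hF.slope_antitone
    (fun k hk => by simpa only [map_sub, totalZ_sub, Int.cast_sub] using hF.theta_step k hk)
    (fun k hk => by
      simpa using totalZ_dimZ_mono (inf_le_inf_left W (hF.mono k hk)))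
    (fun k hk => by
      have hmod := congrArg totalZ (dimZ_inf_sup_sub (V := W) (hF.mono k hk))
      have hle := totalZ_dimZ_mono (sup_le (inf_le_right (a := W)) (hF.mono k hk))
      rw [totalZ_sub, totalZ_sub] at hmod
      simp only [← Int.cast_sub, Int.cast_le]
      omega)
    (fun k hk => (hF.slopeBound k hk).inf (hF.isSubRep k hk.le) (hF.isSubRep (k+1) hk)
      (hF.mono k hk) hW)
  simpa [hF.bot, hF.top, dimZ_bot, totalZ] using h

theorem onOrBelow (hF : IsWeakHNFiltration θ X m F μ) {W : X.SubFam} (hW : X.IsSubRep W) :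
    OnOrBelow (totalZ (dimZ W)) (θ (dimZ W)) m (fun l => totalZ (dimZ (F l)))
      (fun l => θ (dimZ (F l))) := by
  intro l hl hlm hlt
  obtain ⟨j, rfl⟩ : ∃ j, l = j + 1 := ⟨l - 1, by omega⟩
  simp only [Nat.add_sub_cancel] at hlt ⊢
  have hgap : (0 : ℚ) ≤ totalZ (dimZ (F (j+1))) - totalZ (dimZ (F j)) := by
    exact_mod_cast (sub_pos.mpr hlt).le
  have hline := mul_le_mul_of_nonneg_left (hF.theta_le_polygon_line hW (j := j) (by omega)) hgap
  have hexact := hF.theta_step j (by omega)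
  rw [map_sub, totalZ_sub] at hexact
  suffices h : ((totalZ (dimZ (F (j+1))) - totalZ (dimZ (F j)) : ℤ) * θ (dimZ W) : ℚ) ≤
      (totalZ (dimZ (F (j+1))) - totalZ (dimZ (F j)) : ℤ) * θ (dimZ (F j)) +
      (θ (dimZ (F (j+1))) - θ (dimZ (F j)) : ℤ) * (totalZ (dimZ W) - totalZ (dimZ (F j)) : ℤ) by
    exact_mod_cast h
  push_cast at hexact hline ⊢
  linear_combination hline - (totalZ (dimZ W) - totalZ (dimZ (F j)) : ℚ) * hexact

end IsWeakHNFiltration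

end WeakHN

section Doubled

variable {σ : QInv Q} {D : Duality Q σ} {θ : (Q.V → ℤ) →+ ℤ} {M : QRep Q} {B : M.Bilin}

/-- The filtration `U_0 ⊆ ⋯ ⊆ U_r ⊆ U_r^⊥ ⊆ ⋯ ⊆ U_0^⊥` indexed by `0, …, 2r+1`. -/
noncomputable def doubledFiltration (σ : QInv Q) (B : M.Bilin) (r : ℕ)
    (U : Fin (r+1) → M.SubFam) (l : ℕ) : M.SubFam :=
  if l ≤ r then U (Fin.clamp l r) else orthFam σ M B (U (Fin.clamp (2*r+1-l) r))

variable {r : ℕ} {U : Fin (r+1) → M.SubFam}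

lemma doubledFiltration_of_le {l : ℕ} (hl : l ≤ r) (i : Fin (r+1)) (hi : (i : ℕ) = l) :
    doubledFiltration σ B r U l = U i := by
  rw [doubledFiltration, if_pos hl]
  congr
  ext
  simp [Fin.coe_clamp, hi, hl]

lemma doubledFiltration_of_gt {l : ℕ} (hl : r < l) (i : Fin (r+1)) (hi : (i : ℕ) + l = 2*r+1) :
    doubledFiltration σ B r U l = orthFam σ M B (U i) := by
  rw [doubledFiltration, if_neg hl.not_ge]
  congr
  ext
  simp only [Fin.coe_clamp]
  omega

lemma doubledFiltration_zero (hU0 : U 0 = ⊥) : doubledFiltration σ B r U 0 = ⊥ := by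
  rw [doubledFiltration_of_le (Nat.zero_le r) 0 rfl, hU0]

lemma doubledFiltration_top (hU0 : U 0 = ⊥) : doubledFiltration σ B r U (2*r+1) = ⊤ := by
  rw [doubledFiltration_of_gt (by omega) 0 (by simp), hU0, orthFam_bot]

lemma doubledFiltration_castSucc (k : Fin r) : doubledFiltration σ B r U k = U k.castSucc :=
  doubledFiltration_of_le k.isLt.le _ rfl

lemma doubledFiltration_succ (k : Fin r) : doubledFiltration σ B r U (k+1) = U k.succ :=
  doubledFiltration_of_le k.isLt _ rfl

lemma doubledFiltration_self : doubledFiltration σ B r U r = U (Fin.last r) :=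
  doubledFiltration_of_le le_rfl _ rfl

lemma doubledFiltration_succ_self :
    doubledFiltration σ B r U (r+1) = orthFam σ M B (U (Fin.last r)) :=
  doubledFiltration_of_gt (Nat.lt_succ_self r) _ (by simp; omega)

lemma doubledFiltration_two_mul_sub (k : Fin r) :
    doubledFiltration σ B r U (2*r - k) = orthFam σ M B (U k.succ) :=
  doubledFiltration_of_gt (by omega) _ (by simp; omega)

lemma doubledFiltration_two_mul_sub_add_one (k : Fin r) :
    doubledFiltration σ B r U (2*r - k + 1) = orthFam σ M B (U k.castSucc) :=
  doubledFiltration_of_gt (by omega) _ (by simp; omega)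

lemma doubledFiltration_isSubRep (hB : IsSelfDualForm σ D M B) (hU : ∀ k, M.IsSubRep (U k))
    (l : ℕ) : M.IsSubRep (doubledFiltration σ B r U l) := by
  unfold doubledFiltration
  split_ifs
  · exact hU _
  · exact hB.isSubRep_orthFam (hU _)

lemma chainSteps_fin (k : Fin r) :
    chainSteps r U k = dimZ (U k.succ) - dimZ (U k.castSucc) := by
  rw [chainSteps, dif_pos k.isLt]
  rfl

lemma doubledSeq_step (hB : IsSelfDualForm σ D M B) (hθ : SigmaCompatible σ θ) :
    ∀ l < 2*r+1,
      totalZ (doubledSeq σ r (chainSteps r U) (quotDimZ σ B (U (Fin.last r))) l) =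
        totalZ (dimZ (doubledFiltration σ B r U (l+1))) -
          totalZ (dimZ (doubledFiltration σ B r U l)) ∧
      θ (doubledSeq σ r (chainSteps r U) (quotDimZ σ B (U (Fin.last r))) l) =
        θ (dimZ (doubledFiltration σ B r U (l+1))) - θ (dimZ (doubledFiltration σ B r U l)) := by
  refine Nat.forall_lt_two_mul_add_one (fun k => ?_) ?_ (fun k => ?_)
  · rw [doubledSeq, if_pos k.isLt, chainSteps_fin, doubledFiltration_succ,
      doubledFiltration_castSucc, totalZ_sub, map_sub]
    exact ⟨rfl, rfl⟩
  · rw [doubledSeq, if_neg (lt_irrefl r), if_pos rfl, quotDimZ, doubledFiltration_self,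
      doubledFiltration_succ_self, totalZ_sub, map_sub]
    exact ⟨rfl, rfl⟩
  · have hk := k.isLt
    rw [doubledSeq, if_neg (by omega), if_neg (by omega), show 2*r - (2*r - k) = k by omega,
      doubledFiltration_two_mul_sub, doubledFiltration_two_mul_sub_add_one]
    have hθσ := hθ (chainSteps r U k)
    have htσ := totalZ_comp_onV σ (chainSteps r U k)
    rw [chainSteps_fin] at hθσ htσ ⊢
    rw [hθσ, htσ, totalZ_sub, map_sub, hB.totalZ_dimZ_orthFam, hB.totalZ_dimZ_orthFam,
      hB.theta_dimZ_orthFam hθ, hB.theta_dimZ_orthFam hθ]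
    constructor <;> ring

lemma seqA_doubledSeq (hB : IsSelfDualForm σ D M B) (hθ : SigmaCompatible σ θ)
    (hU0 : U 0 = ⊥) {l : ℕ} (hl : l ≤ 2*r+1) :
    seqA (doubledSeq σ r (chainSteps r U) (quotDimZ σ B (U (Fin.last r)))) l =
      totalZ (dimZ (doubledFiltration σ B r U l)) := by
  rw [seqA, Finset.sum_congr rfl fun k hk =>
    (doubledSeq_step hB hθ k (by simp at hk; omega)).1,
    Finset.sum_range_sub (fun k => totalZ (dimZ (doubledFiltration σ B r U k))),
    doubledFiltration_zero hU0, dimZ_bot]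
  simp [totalZ]

lemma seqB_doubledSeq (hB : IsSelfDualForm σ D M B) (hθ : SigmaCompatible σ θ)
    (hU0 : U 0 = ⊥) {l : ℕ} (hl : l ≤ 2*r+1) :
    seqB θ (doubledSeq σ r (chainSteps r U) (quotDimZ σ B (U (Fin.last r)))) l =
      θ (dimZ (doubledFiltration σ B r U l)) := by
  rw [seqB, Finset.sum_congr rfl fun k hk =>
    (doubledSeq_step hB hθ k (by simp at hk; omega)).2,
    Finset.sum_range_sub (fun k => θ (dimZ (doubledFiltration σ B r U k))),
    doubledFiltration_zero hU0, dimZ_bot, map_zero, sub_zero]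

/-- The slopes `μ(d^1), …, μ(d^r), 0, -μ(d^r), …, -μ(d^1)` of the doubled filtration. -/
noncomputable def doubledSlope (θ : (Q.V → ℤ) →+ ℤ) (r : ℕ) (U : Fin (r+1) → M.SubFam)
    (l : ℕ) : ℚ :=
  if h : l < r then stepSlope θ r U ⟨l, h⟩
  else if h : 2*r - l < r then -stepSlope θ r U ⟨2*r - l, h⟩ else 0

lemma doubledSlope_of_lt {l : ℕ} (h : l < r) : doubledSlope θ r U l = stepSlope θ r U ⟨l, h⟩ :=
  dif_pos h

lemma doubledSlope_self : doubledSlope θ r U r = 0 := by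
  rw [doubledSlope, dif_neg (lt_irrefl r), dif_neg (by omega)]

lemma doubledSlope_of_gt {l : ℕ} (h : r < l) (hl : l ≤ 2*r) :
    doubledSlope θ r U l = -stepSlope θ r U ⟨2*r - l, by omega⟩ := by
  rw [doubledSlope, dif_neg (by omega), dif_pos (by omega)]

lemma doubledSlope_two_mul_sub (k : Fin r) : doubledSlope θ r U (2*r - k) = -stepSlope θ r U k := by
  rw [doubledSlope_of_gt (by omega) (by omega)]
  congr
  omega

namespace IsSigmaHN

lemma stepSlope_antitone (hHN : IsSigmaHN σ θ M B r U) : Antitone (stepSlope θ r U) :=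
  StrictAnti.antitone fun _ _ h => hHN.2.2.2.2.2.2.1 _ _ h

lemma doubledSlope_antitone (hHN : IsSigmaHN σ θ M B r U) :
    ∀ j k, j ≤ k → k < 2*r+1 → doubledSlope θ r U k ≤ doubledSlope θ r U j := by
  have hpos := hHN.2.2.2.2.2.2.2.1
  intro j k hjk hk
  by_cases hkr : k < r
  · rw [doubledSlope_of_lt hkr, doubledSlope_of_lt (hjk.trans_lt hkr)]
    exact hHN.stepSlope_antitone hjk
  by_cases hjr : r < j
  · rw [doubledSlope_of_gt hjr (by omega), doubledSlope_of_gt (hjr.trans_le hjk) (by omega)]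
    exact neg_le_neg (hHN.stepSlope_antitone (Fin.mk_le_mk.mpr (by omega)))
  have hj : 0 ≤ doubledSlope θ r U j := by
    rcases (not_lt.mp hjr).lt_or_eq with h | rfl
    · exact (doubledSlope_of_lt h).symm ▸ (hpos _).le
    · exact doubledSlope_self.ge
  have hk : doubledSlope θ r U k ≤ 0 := by
    rcases (not_lt.mp hkr).lt_or_eq with h | rfl
    · exact (doubledSlope_of_gt h (by omega)).symm ▸ neg_nonpos.mpr (hpos _).le
    · exact doubledSlope_self.le
  exact hk.trans hj

lemma theta_step (hHN : IsSigmaHN σ θ M B r U) (k : Fin r) :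
    (θ (dimZ (U k.succ) - dimZ (U k.castSucc)) : ℚ) =
      stepSlope θ r U k * totalZ (dimZ (U k.succ) - dimZ (U k.castSucc)) :=
  theta_eq_slope_mul (totalZ_dimZ_sub_pos
    (lt_of_le_of_ne (hHN.2.2.1 k) (hHN.2.2.2.1 k))).ne'

theorem isWeakHNFiltration_doubled (hHN : IsSigmaHN σ θ M B r U)
    (hB : IsSelfDualForm σ D M B) (hθ : SigmaCompatible σ θ) :
    IsWeakHNFiltration θ M (2*r+1) (doubledFiltration σ B r U) (doubledSlope θ r U) := by
  have ⟨hsub, hU0, hmono, _, hiso, hss, _, _, hquot⟩ := hHN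
  refine ⟨doubledFiltration_zero hU0, doubledFiltration_top hU0,
    fun l _ => doubledFiltration_isSubRep hB hsub l, ?_, hHN.doubledSlope_antitone, ?_, ?_⟩
  · refine Nat.forall_lt_two_mul_add_one (fun k => ?_) ?_ (fun k => ?_)
    · rw [doubledFiltration_castSucc, doubledFiltration_succ]
      exact hmono k
    · rw [doubledFiltration_self, doubledFiltration_succ_self]
      exact hiso _
    · rw [doubledFiltration_two_mul_sub, doubledFiltration_two_mul_sub_add_one]
      exact orthFam_antitone (hmono k)
  · refine Nat.forall_lt_two_mul_add_one (fun k => ?_) ?_ (fun k => ?_)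
    · rw [doubledFiltration_castSucc, doubledFiltration_succ, doubledSlope_of_lt k.isLt]
      exact hHN.theta_step k
    · rw [doubledFiltration_self, doubledFiltration_succ_self, doubledSlope_self, zero_mul,
        map_sub, hB.theta_dimZ_orthFam hθ, sub_self, Int.cast_zero]
    · have h := hHN.theta_step k
      rw [doubledFiltration_two_mul_sub, doubledFiltration_two_mul_sub_add_one,
        doubledSlope_two_mul_sub]
      simp only [map_sub, totalZ_sub, hB.theta_dimZ_orthFam hθ, hB.totalZ_dimZ_orthFam] at h ⊢
      push_cast at h ⊢
      linarith
  · refine Nat.forall_lt_two_mul_add_one (fun k => ?_) ?_ (fun k => ?_)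
    · rw [doubledFiltration_castSucc, doubledFiltration_succ, doubledSlope_of_lt k.isLt]
      exact (hss k).slopeBound
    · rw [doubledFiltration_self, doubledFiltration_succ_self, doubledSlope_self]
      exact hquot.slopeBound hB hθ
    · rw [doubledFiltration_two_mul_sub, doubledFiltration_two_mul_sub_add_one,
        doubledSlope_two_mul_sub]
      exact (hss k).slopeBound.orth hB hθ (hHN.theta_step k)

end IsSigmaHN

end Doubled

end QRep

open QRep in
theorem sigmaHN_polygon_maximal_general (Q : FinQuiver) (σ : QInv Q) (D : Duality Q σ)
    (θ : (Q.V → ℤ) →+ ℤ) (hθ : SigmaCompatible σ θ)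
    (M : QRep Q) (B : M.Bilin) (hB : IsSelfDualForm σ D M B)
    (r' : ℕ) (U' : Fin (r'+1) → M.SubFam) (hHN : IsSigmaHN σ θ M B r' U')
    (s : ℕ) (V : Fin (s+1) → M.SubFam)
    (hV0 : V 0 = ⊥) (hVsub : ∀ k, M.IsSubRep (V k)) :
    ∀ l ≤ 2*s+1,
      OnOrBelow
        (seqA (doubledSeq σ s (chainSteps s V) (quotDimZ σ B (V (Fin.last s)))) l)
        (seqB θ (doubledSeq σ s (chainSteps s V) (quotDimZ σ B (V (Fin.last s)))) l)
        (2*r'+1)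
        (seqA (doubledSeq σ r' (chainSteps r' U') (quotDimZ σ B (U' (Fin.last r')))))
        (seqB θ (doubledSeq σ r' (chainSteps r' U') (quotDimZ σ B (U' (Fin.last r'))))) := by
  intro l hl
  rw [seqA_doubledSeq hB hθ hV0 hl, seqB_doubledSeq hB hθ hV0 hl,
    onOrBelow_congr (fun k hk => seqA_doubledSeq hB hθ hHN.2.1 hk)
      (fun k hk => seqB_doubledSeq hB hθ hHN.2.1 hk)]
  exact (hHN.isWeakHNFiltration_doubled hB hθ).onOrBelow
    (doubledFiltration_isSubRep hB hVsub l)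

open QRep in
/-- Let `M` be a self-dual representation with σ-Harder–Narasimhan
filtration `0 = U'_0 ⊂ ⋯ ⊂ U'_{r'} ⊂ M`, of σ-HN type `(d'^•, e'^∞)`.  If `M` admits an
isotropic filtration `0 = V_0 ⊆ ⋯ ⊆ V_s ⊆ M` of σ-HN type `(d^•, e^∞)` (nonzero `d^k`,
strictly decreasing positive slopes, `σ(e^∞) = e^∞`), then every vertex of the polygon
`P(d^•, e^∞)` lies on or below the polygon `P(d'^•, e'^∞)`. -/
theorem sigmaHN_polygon_maximal (Q : FinQuiver) (σ : QInv Q) (D : Duality Q σ)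
    (θ : (Q.V → ℤ) →+ ℤ) (hθ : SigmaCompatible σ θ)
    (M : QRep Q) (B : M.Bilin) (hB : IsSelfDualForm σ D M B)
    (r' : ℕ) (U' : Fin (r'+1) → M.SubFam) (hHN : IsSigmaHN σ θ M B r' U')
    (s : ℕ) (V : Fin (s+1) → M.SubFam)
    (hV0 : V 0 = ⊥) (hVsub : ∀ k, M.IsSubRep (V k))
    (hViso : ∀ k, IsotropicFam σ M B (V k))
    (hVmono : ∀ k : Fin s, V k.castSucc ≤ V k.succ)
    (hne : ∀ k < s, chainSteps s V k ≠ 0)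
    (hpos : ∀ k < s, 0 < slope θ (chainSteps s V k))
    (hdec : ∀ k l, k < l → l < s → slope θ (chainSteps s V l) < slope θ (chainSteps s V k))
    (he : (fun i => quotDimZ σ B (V (Fin.last s)) (σ.onV i)) = quotDimZ σ B (V (Fin.last s))) :
    ∀ l ≤ 2*s+1,
      OnOrBelow
        (seqA (doubledSeq σ s (chainSteps s V) (quotDimZ σ B (V (Fin.last s)))) l)
        (seqB θ (doubledSeq σ s (chainSteps s V) (quotDimZ σ B (V (Fin.last s)))) l)
        (2*r'+1)
        (seqA (doubledSeq σ r' (chainSteps r' U') (quotDimZ σ B (U' (Fin.last r')))))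
        (seqB θ (doubledSeq σ r' (chainSteps r' U') (quotDimZ σ B (U' (Fin.last r'))))) :=
  sigmaHN_polygon_maximal_general Q σ D θ hθ M B hB r' U' hHN s V hV0 hVsub
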